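/- Let p > 1/2 and for N odd let q_N = Pr[Binomial(N, p) > N/2] be the majority-vote success probability. Then q_N is the probability the majority vote is correct, q_N ≥ p for all odd N ≥ 1, and q_N is non-decreasing in N over odd values. -/

import Mathlib

/-!
Let `N = 2m + 1` and `p' = 1 - p`. Two extra votes change the verdict only when the first `N`
votes miss a majority by one and both new votes are correct, or win by exactly one and both new
votes are wrong. Since `C(N, m) = C(N, m + 1)`, these events have probabilities `p r` and `p' r`
with `r = C(N, m) p^(m+1) p'^(m+1)`, so `q_(N+2) - q_N = (p - p') r ≥ 0`; and `q_1 = p`.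
-/

open scoped ENNReal NNReal

namespace Condorcet

open Finset

section Binomial

variable {R : Type*} [CommSemiring R] (p q : R)

noncomputable def binomialTerm (n k : ℕ) : R := n.choose k * p ^ k * q ^ (n - k)

noncomputable def binomialUpperTail (n j : ℕ) : R := ∑ k ∈ Ico j (n + 1), binomialTerm p q n k

noncomputable def majorityProb (n : ℕ) : R := binomialUpperTail p q n (n / 2 + 1)

theorem binomialTerm_eq_zero_of_lt {n k : ℕ} (h : n < k) : binomialTerm p q n k = 0 := by
  simp [binomialTerm, Nat.choose_eq_zero_of_lt h]

theorem binomialTerm_succ_succ (n k : ℕ) :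
    binomialTerm p q (n + 1) (k + 1)
      = binomialTerm p q n (k + 1) * q + binomialTerm p q n k * p := by
  unfold binomialTerm
  rcases lt_trichotomy k n with h | rfl | h
  · obtain ⟨d, rfl⟩ := Nat.exists_eq_add_of_lt h
    rw [Nat.choose_succ_succ, show k + d + 1 + 1 - (k + 1) = d + 1 by omega,
      show k + d + 1 - (k + 1) = d by omega, show k + d + 1 - k = d + 1 by omega]
    push_cast
    ring
  · simp [pow_succ]
  · simp [Nat.choose_eq_zero_of_lt h, Nat.choose_eq_zero_of_lt (Nat.succ_lt_succ h),
      Nat.choose_eq_zero_of_lt (h.trans (Nat.lt_succ_self k))]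

theorem mul_binomialTerm_central (m : ℕ) :
    p * binomialTerm p q (2 * m + 1) m = q * binomialTerm p q (2 * m + 1) (m + 1) := by
  unfold binomialTerm
  rw [Nat.choose_symm_half, show 2 * m + 1 - m = m + 1 by omega,
    show 2 * m + 1 - (m + 1) = m by omega]
  ring

theorem binomialUpperTail_eq_add (n j : ℕ) :
    binomialUpperTail p q n j = binomialTerm p q n j + binomialUpperTail p q n (j + 1) := by
  unfold binomialUpperTail
  rcases Nat.lt_or_ge j (n + 1) with h | h
  · exact sum_eq_sum_Ico_succ_bot h _
  · simp [Ico_eq_empty_of_le h, Ico_eq_empty_of_le (h.trans j.le_succ),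
      binomialTerm_eq_zero_of_lt p q (Nat.lt_of_succ_le h)]

theorem binomialUpperTail_succ_succ (n j : ℕ) :
    binomialUpperTail p q (n + 1) (j + 1)
      = binomialUpperTail p q n (j + 1) * q + binomialUpperTail p q n j * p := by
  have hshift :
      ∑ k ∈ Ico j (n + 1), binomialTerm p q n (k + 1) = binomialUpperTail p q n (j + 1) := by
    rw [sum_Ico_add' (binomialTerm p q n), binomialUpperTail]
    rcases Nat.lt_or_ge j (n + 1) with h | h
    · rw [sum_Ico_succ_top (by omega), binomialTerm_eq_zero_of_lt p q n.lt_succ_self, add_zero]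
    · rw [Ico_eq_empty_of_le (by omega), Ico_eq_empty_of_le (by omega)]
  rw [← hshift]
  unfold binomialUpperTail
  rw [← sum_Ico_add' (binomialTerm p q (n + 1)), sum_mul, sum_mul, ← sum_add_distrib]
  exact sum_congr rfl fun k _ => binomialTerm_succ_succ p q n k

theorem binomialUpperTail_add_two (hpq : p + q = 1) (n j : ℕ) :
    binomialUpperTail p q (n + 2) (j + 2) + q ^ 2 * binomialTerm p q n (j + 1)
      = binomialUpperTail p q n (j + 1) + p ^ 2 * binomialTerm p q n j := by
  rw [binomialUpperTail_succ_succ, binomialUpperTail_succ_succ, binomialUpperTail_succ_succ,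
    binomialUpperTail_eq_add p q n j, binomialUpperTail_eq_add p q n (j + 1)]
  calc _ = binomialUpperTail p q n (j + 2) * (p + q) ^ 2
        + binomialTerm p q n (j + 1) * (p + q) ^ 2
        + p ^ 2 * binomialTerm p q n j := by ring
    _ = _ := by rw [hpq]; ring

theorem majorityProb_one : majorityProb p q 1 = p := by
  simp [majorityProb, binomialUpperTail, binomialTerm]

end Binomial

section Ordered

variable {R : Type*} [CommSemiring R] [PartialOrder R] [IsOrderedRing R]
  [IsOrderedCancelAddMonoid R] {p q : R}

theorem majorityProb_odd_le_succ (hq : 0 ≤ q) (hqp : q ≤ p) (hpq : p + q = 1) (m : ℕ) :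
    majorityProb p q (2 * m + 1) ≤ majorityProb p q (2 * (m + 1) + 1) := by
  set c := q * binomialTerm p q (2 * m + 1) (m + 1)
  have hp : 0 ≤ p := hq.trans hqp
  have hc : 0 ≤ c := by unfold c binomialTerm; positivity
  have key :
      majorityProb p q (2 * (m + 1) + 1) + q * c = majorityProb p q (2 * m + 1) + p * c := by
    have h := binomialUpperTail_add_two p q hpq (2 * m + 1) m
    rw [sq, sq, mul_assoc, mul_assoc, mul_binomialTerm_central] at h
    rwa [majorityProb, majorityProb, show (2 * (m + 1) + 1) / 2 + 1 = m + 2 by omega,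
      show (2 * m + 1) / 2 + 1 = m + 1 by omega, show 2 * (m + 1) + 1 = 2 * m + 1 + 2 by ring]
  refine le_of_add_le_add_right (a := q * c) ?_
  calc majorityProb p q (2 * m + 1) + q * c ≤ majorityProb p q (2 * m + 1) + p * c := by gcongr
    _ = _ := key.symm

theorem monotone_majorityProb_odd (hq : 0 ≤ q) (hqp : q ≤ p) (hpq : p + q = 1) :
    Monotone fun m => majorityProb p q (2 * m + 1) :=
  monotone_nat_of_le_succ (majorityProb_odd_le_succ hq hqp hpq)

end Ordered

theorem binomial_toMeasure_gt_half (p : ℝ≥0) (h : p ≤ 1) (N : ℕ) :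
    (PMF.binomial p h N).toMeasure {k | (N : ℝ) / 2 < (k : ℝ)} = majorityProb p (1 - p) N := by
  classical
  have hcond (k : ℕ) : (N : ℝ) / 2 < k ↔ N / 2 + 1 ≤ k := by
    rw [div_lt_iff₀ two_pos]
    exact_mod_cast (by omega : N < k * 2 ↔ N / 2 + 1 ≤ k)
  have hIco : Ico (N / 2 + 1) (N + 1) = (range (N + 1)).filter (N / 2 + 1 ≤ ·) := by
    ext k; simp only [mem_Ico, mem_filter, mem_range]; omega
  rw [PMF.toMeasure_apply_fintype, majorityProb, binomialUpperTail, ENNReal.ofNNReal_finsetSum,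
    hIco, sum_filter, ← Fin.sum_univ_eq_sum_range]
  refine sum_congr rfl fun k _ => ?_
  simp only [Set.indicator_apply, Set.mem_ofPred_eq, hcond, PMF.binomial, PMF.ofFintype_apply,
    binomialTerm, Fin.val_last]
  split_ifs
  · push_cast
    ring
  · rfl

end Condorcet

/-- Condorcet jury theorem (finite-N part): for p > 1/2 and odd N, the majority-vote
success probability q_N = Pr[Binomial(N,p) > N/2] satisfies q_N ≥ p, and q_N is
non-decreasing in N over odd values. -/
theorem stmt11 (p : ℝ≥0∞) (hp1 : p ≤ 1) (hp : 1 / 2 < p)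
    (q : ℕ → ℝ≥0∞)
    (hq : ∀ N, q N = (PMF.binomial p.toNNReal (by simpa using ENNReal.toNNReal_mono ENNReal.one_ne_top hp1) N).toMeasure {k | (N : ℝ) / 2 < (k : ℝ)}) :
    (∀ N, Odd N → p ≤ q N) ∧
    (∀ N M, Odd N → Odd M → N ≤ M → q N ≤ q M) := by
  set r := p.toNNReal
  have hpr : p = r := (ENNReal.coe_toNNReal (ne_top_of_le_ne_top ENNReal.one_ne_top hp1)).symm
  have hr1 : r ≤ 1 := by exact_mod_cast hpr ▸ hp1
  have hrr : 1 - r ≤ r := by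
    have h : (1 : ℝ≥0∞) ≤ r + r :=
      calc 1 = 1 / 2 + 1 / 2 := (ENNReal.add_halves 1).symm
        _ ≤ p + p := add_le_add hp.le hp.le
        _ = r + r := by rw [hpr]
    exact tsub_le_iff_right.mpr (mod_cast h)
  have hqr (N : ℕ) : q N = Condorcet.majorityProb r (1 - r) N :=
    (hq N).trans (Condorcet.binomial_toMeasure_gt_half r _ N)
  have hmono : ∀ N M, Odd N → Odd M → N ≤ M → q N ≤ q M := by
    rintro N M ⟨a, rfl⟩ ⟨b, rfl⟩ hNM
    rw [hqr, hqr, ENNReal.coe_le_coe]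
    exact Condorcet.monotone_majorityProb_odd zero_le hrr (add_tsub_cancel_of_le hr1) (by omega)
  refine ⟨fun N hN => ?_, hmono⟩
  calc p = q 1 := by rw [hqr, Condorcet.majorityProb_one, hpr]
    _ ≤ q N := hmono 1 N odd_one hN hN.pos
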